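/- arXiv:1703.09568 — 6 statements merged into one kernel-verified Lean document; each statement's English description precedes it below -/
import Mathlib

section
/- Let n : ℕ. For any complex matrix ρ indexed by (Fin n → ZMod 2), and any two pairs of vectors (a, a') and (b, b') in (Fin n → ZMod 2) × (Fin n → ZMod 2) with (a, a') ≠ (b, b'), the Pauli twirl of the sandwiched pair vanishes: ∑ over all k, k' : Fin n → ZMod 2 of (Z k * X k') * (Z a * X a') * (Z k * X k') * ρ * (Z k * X k') * (Z b * X b') * (Z k * X k') equals the zero matrix. -/
open Matrix

/-- The Z-type Pauli operator on `n` qubits: diagonal matrix with entry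
`(-1)^(∑ i, (a i).val * (x i).val)` at `(x, x)`. -/
noncomputable def PauliZ (n : ℕ) (a : Fin n → ZMod 2) :
    Matrix (Fin n → ZMod 2) (Fin n → ZMod 2) ℂ :=
  Matrix.diagonal fun x => (-1 : ℂ) ^ (∑ i, (a i).val * (x i).val)

/-- The X-type Pauli operator on `n` qubits: entry at `(x, y)` is `1` if `y = x + c`,
else `0`. -/
noncomputable def PauliX (n : ℕ) (c : Fin n → ZMod 2) :
    Matrix (Fin n → ZMod 2) (Fin n → ZMod 2) ℂ :=
  fun x y => if y = x + c then 1 else 0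


noncomputable def chi (n : ℕ) (a x : Fin n → ZMod 2) : ℂ :=
  (-1 : ℂ) ^ (∑ i, (a i).val * (x i).val)

lemma neg_one_pow_par {m k : ℕ} (h : m % 2 = k % 2) : ((-1:ℂ))^m = (-1)^k := by
  rw [← Nat.div_add_mod m 2, ← Nat.div_add_mod k 2, pow_add, pow_add, pow_mul, pow_mul, h]
  simp

lemma sum_par {ι : Type*} {s : Finset ι} {f g : ι → ℕ}
    (h : ∀ i ∈ s, f i % 2 = g i % 2) :
    (∑ i ∈ s, f i) % 2 = (∑ i ∈ s, g i) % 2 := by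
  rw [Finset.sum_nat_mod, Finset.sum_congr rfl h, ← Finset.sum_nat_mod]

lemma chi_add_right (n : ℕ) (a x y : Fin n → ZMod 2) :
    chi n a (x + y) = chi n a x * chi n a y := by
  unfold chi
  rw [← pow_add]
  apply neg_one_pow_par
  rw [← Finset.sum_add_distrib]
  apply sum_par
  intro i _
  have : ((x + y) i).val = ((x i).val + (y i).val) % 2 := by
    simp [Pi.add_apply, ZMod.val_add]
  rw [this, ← mul_add]
  exact Nat.ModEq.mul_left _ (Nat.mod_modEq _ 2)

lemma chi_add_left (n : ℕ) (a b x : Fin n → ZMod 2) :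
    chi n (a + b) x = chi n a x * chi n b x := by
  unfold chi
  rw [← pow_add]
  apply neg_one_pow_par
  rw [← Finset.sum_add_distrib]
  apply sum_par
  intro i _
  have : ((a + b) i).val = ((a i).val + (b i).val) % 2 := by
    simp [Pi.add_apply, ZMod.val_add]
  rw [this, ← add_mul]
  exact Nat.ModEq.mul_right _ (Nat.mod_modEq _ 2)

lemma chi_comm (n : ℕ) (a x : Fin n → ZMod 2) : chi n a x = chi n x a := by
  unfold chi
  congr 1
  exact Finset.sum_congr rfl fun i _ => mul_comm _ _

lemma chi_mul_self (n : ℕ) (a x : Fin n → ZMod 2) : chi n a x * chi n a x = 1 := by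
  unfold chi
  rw [← pow_add]
  exact Even.neg_one_pow ⟨_, rfl⟩

lemma sum_chi (n : ℕ) (a : Fin n → ZMod 2) (ha : a ≠ 0) :
    ∑ x : Fin n → ZMod 2, chi n a x = 0 := by
  obtain ⟨i, hi⟩ : ∃ i, a i ≠ 0 := by
    by_contra hc; push_neg at hc; exact ha (funext hc)
  have hai : a i = 1 := (by decide : ∀ z : ZMod 2, z ≠ 0 → z = 1) _ hi
  set δ : Fin n → ZMod 2 := fun j => if j = i then 1 else 0 with hδ
  have hchiδ : chi n a δ = -1 := by
    unfold chi
    have : (∑ j, (a j).val * (δ j).val) = 1 := by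
      rw [Finset.sum_eq_single i]
      · simp [hδ, hai, ZMod.val_one]
      · intro j _ hj; simp [hδ, hj]
      · simp
    rw [this, pow_one]
  have key : ∀ x, chi n a (x + δ) = - chi n a x := by
    intro x; rw [chi_add_right, hchiδ]; ring
  have h1 : ∑ x : Fin n → ZMod 2, chi n a (x + δ) = ∑ x : Fin n → ZMod 2, chi n a x :=
    Fintype.sum_equiv (Equiv.addRight δ) _ _ (fun x => rfl)
  have h2 : ∑ x : Fin n → ZMod 2, chi n a (x + δ) = - ∑ x : Fin n → ZMod 2, chi n a x := by
    simp [key]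
  have := h1.symm.trans h2
  have h3 : (2:ℂ) * ∑ x : Fin n → ZMod 2, chi n a x = 0 := by linear_combination this
  simpa using h3

lemma PauliZ_eq (n : ℕ) (a : Fin n → ZMod 2) : PauliZ n a = Matrix.diagonal (chi n a) := rfl

lemma add_add_cancel' {n : ℕ} (u v : Fin n → ZMod 2) : u + v + u = v := by
  funext i
  exact (by decide : ∀ p q : ZMod 2, p + q + p = q) (u i) (v i)

lemma Z_mul_Z (n : ℕ) (a b : Fin n → ZMod 2) : PauliZ n a * PauliZ n b = PauliZ n (a + b) := by
  rw [PauliZ_eq, PauliZ_eq, PauliZ_eq, diagonal_mul_diagonal]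
  have : (fun x => chi n a x * chi n b x) = chi n (a + b) :=
    funext fun x => (chi_add_left n a b x).symm
  rw [this]

lemma X_mul_X (n : ℕ) (a b : Fin n → ZMod 2) : PauliX n a * PauliX n b = PauliX n (a + b) := by
  ext x y
  simp only [PauliX, Matrix.mul_apply, ite_mul, one_mul, zero_mul]
  rw [Finset.sum_ite_eq' Finset.univ (x + a) (fun z => if y = z + b then (1:ℂ) else 0)]
  simp [add_assoc]

lemma X_mul_Z (n : ℕ) (c a : Fin n → ZMod 2) :
    PauliX n c * PauliZ n a = chi n a c • (PauliZ n a * PauliX n c) := by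
  ext x y
  rw [PauliZ_eq, Matrix.smul_apply, Matrix.mul_diagonal, Matrix.diagonal_mul]
  by_cases hxy : y = x + c
  · subst hxy
    simp only [PauliX, if_pos rfl, one_mul, mul_one]
    rw [chi_add_right, smul_eq_mul]
    ring
  · simp [PauliX, hxy]

lemma ZX_mul_ZX (n : ℕ) (a a' b b' : Fin n → ZMod 2) :
    (PauliZ n a * PauliX n a') * (PauliZ n b * PauliX n b') =
      chi n b a' • (PauliZ n (a + b) * PauliX n (a' + b')) := by
  calc (PauliZ n a * PauliX n a') * (PauliZ n b * PauliX n b')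
      = PauliZ n a * ((PauliX n a' * PauliZ n b) * PauliX n b') := by
        simp only [mul_assoc]
    _ = PauliZ n a * ((chi n b a' • (PauliZ n b * PauliX n a')) * PauliX n b') := by
        rw [X_mul_Z]
    _ = chi n b a' • (PauliZ n a * PauliZ n b * (PauliX n a' * PauliX n b')) := by
        simp only [smul_mul_assoc, mul_smul_comm, mul_assoc]
    _ = chi n b a' • (PauliZ n (a + b) * PauliX n (a' + b')) := by
        rw [Z_mul_Z, X_mul_X]

lemma conj_ZX (n : ℕ) (k k' a a' : Fin n → ZMod 2) :
    (PauliZ n k * PauliX n k') * (PauliZ n a * PauliX n a') * (PauliZ n k * PauliX n k') =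
      (chi n a k' * (chi n k k' * chi n k a')) • (PauliZ n a * PauliX n a') := by
  rw [ZX_mul_ZX, smul_mul_assoc, ZX_mul_ZX, add_add_cancel', add_add_cancel',
    chi_add_right, smul_smul]

/-- Pauli twirl lemma: twirling by all n-fold Pauli tensor products kills all
cross terms between distinct Pauli operators. -/
theorem pauli_twirl (n : ℕ)
    (ρ : Matrix (Fin n → ZMod 2) (Fin n → ZMod 2) ℂ)
    (a a' b b' : Fin n → ZMod 2) (h : (a, a') ≠ (b, b')) :
    ∑ k : Fin n → ZMod 2, ∑ k' : Fin n → ZMod 2,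
      (PauliZ n k * PauliX n k') * (PauliZ n a * PauliX n a') * (PauliZ n k * PauliX n k') *
        ρ *
      (PauliZ n k * PauliX n k') * (PauliZ n b * PauliX n b') * (PauliZ n k * PauliX n k')
      = 0 := by
  set Q := PauliZ n a * PauliX n a' with hQ
  set R := PauliZ n b * PauliX n b' with hR
  have hsummand : ∀ k k' : Fin n → ZMod 2,
      (PauliZ n k * PauliX n k') * Q * (PauliZ n k * PauliX n k') * ρ *
        (PauliZ n k * PauliX n k') * R * (PauliZ n k * PauliX n k')
      = (chi n (a + b) k' * chi n k (a' + b')) • (Q * ρ * R) := by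
    intro k k'
    set P := PauliZ n k * PauliX n k' with hP
    have e1 : P * Q * P = (chi n a k' * (chi n k k' * chi n k a')) • Q := conj_ZX n k k' a a'
    have e2 : P * R * P = (chi n b k' * (chi n k k' * chi n k b')) • R := conj_ZX n k k' b b'
    calc P * Q * P * ρ * P * R * P
        = (P * Q * P) * ρ * (P * R * P) := by
          simp only [mul_assoc]
      _ = ((chi n a k' * (chi n k k' * chi n k a')) • Q) * ρ *
            ((chi n b k' * (chi n k k' * chi n k b')) • R) := by rw [e1, e2]
      _ = ((chi n a k' * (chi n k k' * chi n k a')) *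
            (chi n b k' * (chi n k k' * chi n k b'))) • (Q * ρ * R) := by
          simp only [smul_mul_assoc, mul_smul_comm, smul_smul]
          ring_nf
      _ = (chi n (a + b) k' * chi n k (a' + b')) • (Q * ρ * R) := by
          rw [show (chi n a k' * (chi n k k' * chi n k a')) *
                (chi n b k' * (chi n k k' * chi n k b'))
              = (chi n a k' * chi n b k') * ((chi n k a' * chi n k b') *
                  (chi n k k' * chi n k k')) from by ring,
            chi_mul_self, mul_one, ← chi_add_left, ← chi_add_right]
  simp only [hsummand]
  have hfactor : ∑ k : Fin n → ZMod 2, ∑ k' : Fin n → ZMod 2,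
      (chi n (a + b) k' * chi n k (a' + b')) • (Q * ρ * R)
      = ((∑ k' : Fin n → ZMod 2, chi n (a + b) k') *
          (∑ k : Fin n → ZMod 2, chi n k (a' + b'))) • (Q * ρ * R) := by
    have step1 : ∀ k : Fin n → ZMod 2,
        ∑ k' : Fin n → ZMod 2, (chi n (a + b) k' * chi n k (a' + b')) • (Q * ρ * R)
        = ((∑ k' : Fin n → ZMod 2, chi n (a + b) k') * chi n k (a' + b')) • (Q * ρ * R) := by
      intro k
      rw [← Finset.sum_smul, Finset.sum_mul]
    simp only [step1]
    rw [← Finset.sum_smul, ← Finset.mul_sum]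
  rw [hfactor]
  have hor : a + b ≠ 0 ∨ a' + b' ≠ 0 := by
    by_contra hc
    push_neg at hc
    refine h (Prod.ext ?_ ?_)
    · funext i
      exact (by decide : ∀ p q : ZMod 2, p + q = 0 → p = q) _ _ (congrFun hc.1 i)
    · funext i
      exact (by decide : ∀ p q : ZMod 2, p + q = 0 → p = q) _ _ (congrFun hc.2 i)
  rcases hor with hab | hab
  · rw [sum_chi n _ hab, zero_mul, zero_smul]
  · have : ∑ k : Fin n → ZMod 2, chi n k (a' + b') = 0 := by
      rw [show (fun k => chi n k (a' + b')) = chi n (a' + b') from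
        funext fun k => (chi_comm n (a' + b') k).symm]
      exact sum_chi n _ hab
    rw [this, mul_zero, zero_smul]
end

section
/- Let n : ℕ. For any complex matrix ρ indexed by (Fin n → ZMod 2), the full n-qubit Pauli twirl completely depolarizes ρ: ∑ over all k, k' : Fin n → ZMod 2 of (Z k * X k') * ρ * (X k' * Z k) equals 2^n * (trace ρ) • 1 (the scalar 2^n · Tr ρ times the identity matrix). -/
open Matrix

lemma qotp_chi_mul (k a b : ZMod 2) :
    (-1:ℂ)^(k.val*a.val) * (-1:ℂ)^(k.val*b.val) = (-1:ℂ)^(k.val*((a+b)).val) := by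
  have h2 : ∀ t : ZMod 2, t = 0 ∨ t = 1 := by decide
  rcases h2 k with rfl | rfl <;> rcases h2 a with rfl | rfl <;> rcases h2 b with rfl | rfl <;>
    norm_num [ZMod.val_one, show ZMod.val (2:ZMod 2) = 0 from rfl, show ((1:ZMod 2) + 1) = 0 from rfl]

lemma qotp_chi_sum (a : ZMod 2) :
    ∑ b : ZMod 2, (-1:ℂ)^(b.val*a.val) = if a = 0 then 2 else 0 := by
  have h : (Finset.univ : Finset (ZMod 2)) = {0, 1} := by decide
  have h2 : ∀ t : ZMod 2, t = 0 ∨ t = 1 := by decide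
  rcases h2 a with rfl | rfl <;> simp [h, ZMod.val_one]

lemma qotp_sign_sum (n : ℕ) (x y : Fin n → ZMod 2) :
    ∑ k : Fin n → ZMod 2,
      (-1:ℂ)^(∑ i, (k i).val * (x i).val) * (-1:ℂ)^(∑ i, (k i).val * (y i).val)
      = if x = y then (2:ℂ)^n else 0 := by
  have step : ∀ k : Fin n → ZMod 2,
      (-1:ℂ)^(∑ i, (k i).val * (x i).val) * (-1:ℂ)^(∑ i, (k i).val * (y i).val)
      = ∏ i, (-1:ℂ)^((k i).val * ((x i + y i)).val) := by
    intro k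
    rw [← Finset.prod_pow_eq_pow_sum, ← Finset.prod_pow_eq_pow_sum,
      ← Finset.prod_mul_distrib]
    exact Finset.prod_congr rfl fun i _ => qotp_chi_mul _ _ _
  simp only [step]
  have h := Finset.prod_univ_sum (fun _ : Fin n => (Finset.univ : Finset (ZMod 2)))
    (fun i b => (-1:ℂ)^(b.val * ((x i + y i)).val))
  rw [Fintype.piFinset_univ] at h
  rw [← h]
  simp only [qotp_chi_sum]
  by_cases hxy : x = y
  · subst hxy
    simp [CharTwo.add_self_eq_zero]
  · have hex : ∃ i, x i + y i ≠ 0 := by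
      by_contra hc
      push_neg at hc
      apply hxy
      funext i
      have h2 := hc i
      have h3 : x i = - y i := by linear_combination h2
      simpa [CharTwo.neg_eq] using h3
    obtain ⟨i, hi⟩ := hex
    rw [if_neg hxy]
    exact Finset.prod_eq_zero (Finset.mem_univ i) (by simp [hi])

lemma qotp_swap {n : ℕ} (k' a b : Fin n → ZMod 2) : a = b + k' ↔ b = a + k' := by
  have hkk : k' + k' = 0 := by
    funext i
    exact CharTwo.add_self_eq_zero _
  constructor <;> rintro rfl <;> rw [add_assoc, hkk, add_zero]

lemma qotp_entry (n : ℕ) (k k' : Fin n → ZMod 2)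
    (ρ : Matrix (Fin n → ZMod 2) (Fin n → ZMod 2) ℂ) (x y : Fin n → ZMod 2) :
    ((PauliZ n k * PauliX n k') * ρ * (PauliX n k' * PauliZ n k)) x y
      = ((-1:ℂ)^(∑ i, (k i).val * (x i).val) * (-1:ℂ)^(∑ i, (k i).val * (y i).val))
        * ρ (x + k') (y + k') := by
  have hXZ : ∀ z, (PauliX n k' * PauliZ n k) z y
      = (if y = z + k' then 1 else 0) * (-1:ℂ)^(∑ i, (k i).val * (y i).val) := by
    intro z
    rw [PauliZ, Matrix.mul_diagonal]
    rfl
  have hZX : ∀ z, (PauliZ n k * PauliX n k') x z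
      = (-1:ℂ)^(∑ i, (k i).val * (x i).val) * (if z = x + k' then 1 else 0) := by
    intro z
    rw [PauliZ, Matrix.diagonal_mul]
    rfl
  have h1 : ∀ z, ((PauliZ n k * PauliX n k') * ρ) x z
      = (-1:ℂ)^(∑ i, (k i).val * (x i).val) * ρ (x + k') z := by
    intro z
    rw [Matrix.mul_apply]
    simp only [hZX, mul_ite, mul_one, mul_zero, ite_mul, zero_mul, mul_assoc]
    simp [Finset.sum_ite_eq']
  rw [Matrix.mul_apply]
  simp only [h1, hXZ, qotp_swap k' y]
  simp only [ite_mul, zero_mul, one_mul, mul_ite, mul_zero, mul_one]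
  rw [Finset.sum_ite_eq' Finset.univ (y + k')
    (fun z => (-1:ℂ)^(∑ i, (k i).val * (x i).val) * ρ (x + k') z
      * (-1:ℂ)^(∑ i, (k i).val * (y i).val))]
  simp only [Finset.mem_univ, if_true]
  ring

/-- Quantum one-time pad: averaging a state over all Pauli encryptions yields the
maximally mixed state (here, the sum equals `2^n · Tr ρ` times the identity). -/
theorem pauli_twirl_depolarizes (n : ℕ)
    (ρ : Matrix (Fin n → ZMod 2) (Fin n → ZMod 2) ℂ) :
    ∑ k : Fin n → ZMod 2, ∑ k' : Fin n → ZMod 2,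
      (PauliZ n k * PauliX n k') * ρ * (PauliX n k' * PauliZ n k)
      = ((2 : ℂ) ^ n * Matrix.trace ρ) •
          (1 : Matrix (Fin n → ZMod 2) (Fin n → ZMod 2) ℂ) := by
  ext x y
  simp only [Matrix.sum_apply, qotp_entry]
  rw [← Finset.sum_mul_sum]
  rw [qotp_sign_sum]
  have htr : ∑ k' : Fin n → ZMod 2, ρ (x + k') (x + k') = Matrix.trace ρ := by
    rw [Matrix.trace]
    exact Fintype.sum_equiv (Equiv.addLeft x) _ _ (fun k' => rfl)
  simp only [Matrix.smul_apply, Matrix.one_apply, smul_eq_mul]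
  by_cases hxy : x = y
  · subst hxy
    simp [htr]
  · simp [hxy]
end

section
/- For all natural numbers κ, λ, ξ with κ ≥ 2, λ ≥ 1, ξ ≤ κ, λ ≤ κ + ξ, and λ ≤ 2ξ, the following inequality of natural numbers holds: (2κ + 1) * (λ * choose (2κ + 1 − λ) (κ − ξ) + (2κ + 1 − λ) * choose (2κ − λ) (κ − ξ)) ≤ (2κ + 1 − λ) * (κ + 1) * choose (2κ + 1) κ. -/
lemma F2 (M s : ℕ) : (M+1).choose (s+1) ≤ (M+1) * M.choose s := by
  have h := Nat.add_one_mul_choose_eq M s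
  have : (M+1).choose (s+1) ≤ (M+1).choose (s+1) * (s+1) :=
    Nat.le_mul_of_pos_right _ (Nat.succ_pos s)
  omega

lemma step (M l s : ℕ) :
    ((l+1) * ((M+1).choose (s+1)) + (M+1) * (M.choose (s+1))) * (M+2)
      ≤ (l * ((M+2).choose (s+1)) + (M+2) * ((M+1).choose (s+1))) * (M+1) := by
  have hB : (M+1).choose (s+1) = M.choose s + M.choose (s+1) := Nat.choose_succ_succ M s
  have hA : (M+2).choose (s+1) = (M+1).choose s + (M+1).choose (s+1) := Nat.choose_succ_succ (M+1) s
  have hF : (M+1).choose (s+1) ≤ (M+1) * M.choose s := F2 M s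
  have hq : (M+1) * M.choose s = M * M.choose s + M.choose s := by ring
  have hC : M.choose (s+1) ≤ M * M.choose s := by omega
  have h1 : l*(M+1)*(M.choose s) ≤ l*(M+1)*((M+1).choose s) :=
    Nat.mul_le_mul_left _ (Nat.choose_le_choose s (Nat.le_succ M))
  have h2 : (l+M+2)*(M.choose (s+1)) ≤ (l+M+2)*(M * M.choose s) :=
    Nat.mul_le_mul_left _ hC
  rw [hA, hB]
  nlinarith [h1, h2]

lemma key (k s : ℕ) : ∀ l, l ≤ 2*k →
    l * ((2*k+1-l).choose (s+1)) + (2*k+1-l) * ((2*k-l).choose (s+1))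
      ≤ (2*k+1-l) * ((2*k).choose (s+1)) := by
  intro l
  induction l with
  | zero => simp
  | succ l ih =>
    intro h
    have hM : ∃ M, 2*k = M + l + 1 := ⟨2*k - l - 1, by omega⟩
    obtain ⟨M, hM⟩ := hM
    have e1 : 2*k+1-(l+1) = M+1 := by omega
    have e2 : 2*k-(l+1) = M := by omega
    have e3 : 2*k+1-l = M+2 := by omega
    have e4 : 2*k-l = M+1 := by omega
    have ihl := ih (by omega)
    rw [e3, e4] at ihl
    rw [e1, e2]
    have hs := step M l s
    have hchain : ((l+1) * ((M+1).choose (s+1)) + (M+1) * (M.choose (s+1))) * (M+2)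
        ≤ ((M+1) * ((2*k).choose (s+1))) * (M+2) := by
      calc ((l+1) * ((M+1).choose (s+1)) + (M+1) * (M.choose (s+1))) * (M+2)
          ≤ (l * ((M+2).choose (s+1)) + (M+2) * ((M+1).choose (s+1))) * (M+1) := hs
        _ ≤ ((M+2) * ((2*k).choose (s+1))) * (M+1) := Nat.mul_le_mul_right _ ihl
        _ = ((M+1) * ((2*k).choose (s+1))) * (M+2) := by ring
    exact Nat.le_of_mul_le_mul_right hchain (by omega)

/-- Soundness proof of Theorem 1 (Appendix B): an attack touching `l` of the `2κ+1`
rounds (ξ even-position attacks, `l − ξ` odd-position attacks) has trap-acceptance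
probability not exceeding the computation-fidelity lower bound `(2κ+1−l)/(2κ+1)`. -/
theorem trap_acceptance_le_fidelity (κ l ξ : ℕ)
    (hκ : 2 ≤ κ) (hl1 : 1 ≤ l) (hξκ : ξ ≤ κ) (hl : l ≤ κ + ξ) (hl2ξ : l ≤ 2 * ξ) :
    (2 * κ + 1) *
        (l * Nat.choose (2 * κ + 1 - l) (κ - ξ) +
          (2 * κ + 1 - l) * Nat.choose (2 * κ - l) (κ - ξ))
      ≤ (2 * κ + 1 - l) * (κ + 1) * Nat.choose (2 * κ + 1) κ := by
  have hl2κ : l ≤ 2*κ := by omega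
  -- identity: (κ+1)*C(2κ+1,κ) = (2κ+1)*C(2κ,κ)
  have hsym : (2*κ+1).choose (κ+1) = (2*κ+1).choose κ := by
    have := Nat.choose_symm (show κ ≤ 2*κ+1 by omega)
    rwa [show 2*κ+1-κ = κ+1 by omega] at this
  have hid : (2*κ+1) * ((2*κ).choose κ) = (κ+1) * ((2*κ+1).choose κ) := by
    have h := Nat.add_one_mul_choose_eq (2*κ) κ
    rw [h, hsym]; ring
  rcases Nat.eq_or_lt_of_le hξκ with hξeq | hξlt
  · -- κ - ξ = 0
    have hm0 : κ - ξ = 0 := by omega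
    rw [hm0]
    simp only [Nat.choose_zero_right, mul_one]
    have hinner : l + (2*κ+1-l) = 2*κ+1 := by omega
    rw [hinner]
    have hmid : (2*κ).choose 2 ≤ (2*κ).choose κ := by
      have := Nat.choose_le_middle 2 (2*κ)
      rwa [show 2*κ/2 = κ by omega] at this
    obtain ⟨t, ht⟩ : ∃ t, κ = t + 2 := ⟨κ - 2, by omega⟩
    subst ht
    have h2 : (2*(t+2)).choose 2 = (t+2)*(2*t+3) := by
      rw [Nat.choose_two_right, show 2*(t+2)-1 = 2*t+3 by omega,
        show 2*(t+2)*(2*t+3) = ((t+2)*(2*t+3))*2 by ring, Nat.mul_div_cancel _ (by omega)]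
    have hck : 2*(t+2)+1 ≤ (2*(t+2)).choose (t+2) := by nlinarith
    have h1l : 1 ≤ 2*(t+2)+1-l := by omega
    calc (2*(t+2)+1) * (2*(t+2)+1) = (2*(t+2)+1) * (1 * (2*(t+2)+1)) := by ring
      _ ≤ (2*(t+2)+1) * ((2*(t+2)+1-l) * ((2*(t+2)).choose (t+2))) :=
          Nat.mul_le_mul_left _ (Nat.mul_le_mul h1l hck)
      _ = (2*(t+2)+1-l) * ((2*(t+2)+1) * ((2*(t+2)).choose (t+2))) := by ring
      _ = (2*(t+2)+1-l) * ((t+2)+1) * ((2*(t+2)+1).choose (t+2)) := by rw [hid]; ring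
  · -- κ - ξ = s + 1
    obtain ⟨s, hs⟩ : ∃ s, κ - ξ = s + 1 := ⟨κ - ξ - 1, by omega⟩
    rw [hs]
    have hkey := key κ s l hl2κ
    calc (2*κ+1) * (l * ((2*κ+1-l).choose (s+1)) + (2*κ+1-l) * ((2*κ-l).choose (s+1)))
        ≤ (2*κ+1) * ((2*κ+1-l) * ((2*κ).choose (s+1))) := Nat.mul_le_mul_left _ hkey
      _ ≤ (2*κ+1) * ((2*κ+1-l) * ((2*κ).choose κ)) := by
          have hmid : (2*κ).choose (s+1) ≤ (2*κ).choose κ := by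
            have := Nat.choose_le_middle (s+1) (2*κ)
            rwa [show 2*κ/2 = κ by omega] at this
          exact Nat.mul_le_mul_left _ (Nat.mul_le_mul_left _ hmid)
      _ = (2*κ+1-l) * ((2*κ+1) * ((2*κ).choose κ)) := by ring
      _ = (2*κ+1-l) * (κ+1) * ((2*κ+1).choose κ) := by rw [hid]; ring
end

section
/- For all natural numbers κ, λ, ξ with κ ≥ 2, λ ≥ 1, ξ ≤ κ, λ ≤ κ + ξ, and λ ≤ 2ξ, the following inequality of natural numbers holds: (κ + ξ + 1) * (2κ − λ)! * (κ!)^2 ≤ (κ + ξ + 1 − λ) * (2κ)! * (κ + ξ − λ)! * (κ − ξ)!. -/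
open Nat

lemma trap_base (ξ c : ℕ) :
    (Nat.factorial (ξ + c)) ^ 2 ≤ Nat.factorial (2 * ξ + c) * Nat.factorial c := by
  have h1 : (ξ + c).choose ξ * Nat.factorial ξ * Nat.factorial c = Nat.factorial (ξ + c) := by
    have := Nat.choose_mul_factorial_mul_factorial (n := ξ + c) (k := ξ) (by omega)
    simpa using this
  have h2 : (2 * ξ + c).choose ξ * Nat.factorial ξ * Nat.factorial (ξ + c)
      = Nat.factorial (2 * ξ + c) := by
    have := Nat.choose_mul_factorial_mul_factorial (n := 2 * ξ + c) (k := ξ) (by omega)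
    have e : 2 * ξ + c - ξ = ξ + c := by omega
    rw [e] at this
    simpa using this
  have h3 : (ξ + c).choose ξ ≤ (2 * ξ + c).choose ξ :=
    Nat.choose_le_choose ξ (by omega)
  calc (Nat.factorial (ξ + c)) ^ 2
      = ((ξ + c).choose ξ * Nat.factorial ξ * Nat.factorial c) * Nat.factorial (ξ + c) := by
        rw [h1]; ring
    _ ≤ ((2 * ξ + c).choose ξ * Nat.factorial ξ * Nat.factorial c) * Nat.factorial (ξ + c) := by
        have := Nat.mul_le_mul_right (Nat.factorial ξ) h3
        exact Nat.mul_le_mul_right _ (Nat.mul_le_mul_right _ this)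
    _ = ((2 * ξ + c).choose ξ * Nat.factorial ξ * Nat.factorial (ξ + c)) * Nat.factorial c := by
        ring
    _ = Nat.factorial (2 * ξ + c) * Nat.factorial c := by rw [h2]

lemma trap_center (ξ : ℕ) (hξ : 2 ≤ ξ) :
    (2 * ξ + 1) * (Nat.factorial ξ) ^ 2 ≤ Nat.factorial (2 * ξ) := by
  have h2 : (2 * ξ).choose ξ * Nat.factorial ξ * Nat.factorial ξ = Nat.factorial (2 * ξ) := by
    have := Nat.choose_mul_factorial_mul_factorial (n := 2 * ξ) (k := ξ) (by omega)
    have e : 2 * ξ - ξ = ξ := by omega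
    rw [e] at this
    exact this
  have hmid : (2 * ξ).choose 2 ≤ (2 * ξ).choose ξ := by
    have := Nat.choose_le_middle 2 (2 * ξ)
    have e : 2 * ξ / 2 = ξ := by omega
    rwa [e] at this
  have htwo : (2 * ξ).choose 2 = ξ * (2 * ξ - 1) := by
    have h := Nat.choose_two_right (2 * ξ)
    have e : 2 * ξ * (2 * ξ - 1) = 2 * (ξ * (2 * ξ - 1)) := by
      cases ξ with
      | zero => simp
      | succ n => ring_nf
    rw [e, Nat.mul_div_cancel_left _ (by norm_num)] at h
    exact h
  have hch : 2 * ξ + 1 ≤ (2 * ξ).choose ξ := by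
    have h5 : 2 * (2 * ξ - 1) ≤ ξ * (2 * ξ - 1) :=
      Nat.mul_le_mul_right _ hξ
    omega
  calc (2 * ξ + 1) * (Nat.factorial ξ) ^ 2
      ≤ (2 * ξ).choose ξ * (Nat.factorial ξ) ^ 2 :=
        Nat.mul_le_mul_right _ hch
    _ = (2 * ξ).choose ξ * Nat.factorial ξ * Nat.factorial ξ := by ring
    _ = Nat.factorial (2 * ξ) := h2

lemma trap_ind (ξ c : ℕ) (hc : 1 ≤ c) : ∀ i j, i + j = 2 * ξ + c →
    (2 * ξ + c + 1) * Nat.factorial (c + j) * (Nat.factorial (ξ + c)) ^ 2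
      ≤ (j + 1) * Nat.factorial (2 * ξ + 2 * c) * Nat.factorial j * Nat.factorial c := by
  intro i
  induction i with
  | zero =>
      intro j hj
      have hjv : j = 2 * ξ + c := by omega
      subst hjv
      have e : c + (2 * ξ + c) = 2 * ξ + 2 * c := by omega
      rw [e]
      have := trap_base ξ c
      calc (2 * ξ + c + 1) * Nat.factorial (2 * ξ + 2 * c) * (Nat.factorial (ξ + c)) ^ 2
          ≤ (2 * ξ + c + 1) * Nat.factorial (2 * ξ + 2 * c)
              * (Nat.factorial (2 * ξ + c) * Nat.factorial c) :=
            Nat.mul_le_mul_left _ this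
        _ = (2 * ξ + c + 1) * Nat.factorial (2 * ξ + 2 * c) * Nat.factorial (2 * ξ + c)
              * Nat.factorial c := by ring
  | succ i ih =>
      intro j hj
      have h' := ih (j + 1) (by omega)
      have e : c + (j + 1) = (c + j) + 1 := by omega
      rw [e, Nat.factorial_succ, Nat.factorial_succ] at h'
      -- h' : (2ξ+c+1) * ((c+j+1) * (c+j)!) * (..)^2 ≤ (j+2) * (2ξ+2c)! * ((j+1) * j!) * c!
      have key : (c + j + 1) *
          ((2 * ξ + c + 1) * Nat.factorial (c + j) * (Nat.factorial (ξ + c)) ^ 2)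
          ≤ (c + j + 1) *
          ((j + 1) * Nat.factorial (2 * ξ + 2 * c) * Nat.factorial j * Nat.factorial c) := by
        calc (c + j + 1) *
            ((2 * ξ + c + 1) * Nat.factorial (c + j) * (Nat.factorial (ξ + c)) ^ 2)
            = (2 * ξ + c + 1) * ((c + j + 1) * Nat.factorial (c + j))
                * (Nat.factorial (ξ + c)) ^ 2 := by ring
          _ ≤ (j + 1 + 1) * Nat.factorial (2 * ξ + 2 * c)
                * ((j + 1) * Nat.factorial j) * Nat.factorial c := h'
          _ = (j + 2) * ((j + 1) * Nat.factorial (2 * ξ + 2 * c) * Nat.factorial j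
                * Nat.factorial c) := by ring
          _ ≤ (c + j + 1) * ((j + 1) * Nat.factorial (2 * ξ + 2 * c) * Nat.factorial j
                * Nat.factorial c) :=
              Nat.mul_le_mul_right _ (by omega)
      exact Nat.le_of_mul_le_mul_left key (by omega)

/-- Factorial form of the soundness inequality of Theorem 1 (Appendix B). -/
theorem trap_factorial_inequality (κ l ξ : ℕ)
    (hκ : 2 ≤ κ) (hl1 : 1 ≤ l) (hξκ : ξ ≤ κ) (hl : l ≤ κ + ξ) (hl2ξ : l ≤ 2 * ξ) :
    (κ + ξ + 1) * Nat.factorial (2 * κ - l) * (Nat.factorial κ) ^ 2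
      ≤ (κ + ξ + 1 - l) * Nat.factorial (2 * κ) *
          Nat.factorial (κ + ξ - l) * Nat.factorial (κ - ξ) := by
  obtain ⟨c, hc⟩ : ∃ c, κ = ξ + c := ⟨κ - ξ, by omega⟩
  obtain ⟨j, hj⟩ : ∃ j, κ + ξ = l + j := ⟨κ + ξ - l, by omega⟩
  have e1 : 2 * κ - l = c + j := by omega
  have e2 : κ + ξ - l = j := by omega
  have e3 : κ + ξ + 1 - l = j + 1 := by omega
  have e6 : κ + ξ + 1 = 2 * ξ + c + 1 := by omega
  have e7 : κ - ξ = c := by omega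
  rw [e1, e2, e3, e6, e7, show 2 * κ = 2 * ξ + 2 * c from by omega, hc]
  rcases Nat.eq_zero_or_pos c with h0 | hpos
  · -- ξ = κ case
    subst h0
    simp only [Nat.factorial_zero, Nat.add_zero, Nat.mul_zero, Nat.zero_add, mul_one]
    have hξ2 : 2 ≤ ξ := by omega
    have hcen := trap_center ξ hξ2
    calc (2 * ξ + 1) * Nat.factorial j * (Nat.factorial ξ) ^ 2
        = Nat.factorial j * ((2 * ξ + 1) * (Nat.factorial ξ) ^ 2) := by ring
      _ ≤ Nat.factorial j * Nat.factorial (2 * ξ) := Nat.mul_le_mul_left _ hcen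
      _ = 1 * Nat.factorial (2 * ξ) * Nat.factorial j := by ring
      _ ≤ (j + 1) * Nat.factorial (2 * ξ) * Nat.factorial j :=
            Nat.mul_le_mul_right _ (Nat.mul_le_mul_right _ (by omega))
  · exact trap_ind ξ c hpos (2 * ξ + c - j) j (by omega)
end

section
/- Let α be a nonempty finite type with n = Fintype.card α, let q, q', p : α → ℝ with q and q' nonnegative, and let ε ≥ 0, c ≥ 0, γ > 0 be reals. Assume ∑_{x} |q' x − q x| ≤ 2ε and |p x − q' x| ≤ c * q' x for all x. Then the number of elements x of α for which c * q x + 2*ε*(1 + c)/(γ * n) < |p x − q x| is at most γ * n. -/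
/-- Markov-inequality counting step of the proof of Theorem 3: if `q'` is within
total variation `ε` of `q` and `p` approximates `q'` to multiplicative error `c`,
then for all but a `γ` fraction of outcomes, `p` approximates `q` up to
multiplicative error `c` plus additive error `2ε(1+c)/(γn)`. -/
theorem markov_counting_step {α : Type*} [Fintype α] [Nonempty α]
    (n : ℕ) (hn : n = Fintype.card α)
    (q q' p : α → ℝ) (hq : ∀ x, 0 ≤ q x) (hq' : ∀ x, 0 ≤ q' x)
    (ε c γ : ℝ) (hε : 0 ≤ ε) (hc : 0 ≤ c) (hγ : 0 < γ)
    (htv : ∑ x, |q' x - q x| ≤ 2 * ε)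
    (happ : ∀ x, |p x - q' x| ≤ c * q' x) :
    (({x : α | c * q x + 2 * ε * (1 + c) / (γ * n) < |p x - q x|}.ncard : ℝ))
      ≤ γ * n := by
  have hnpos : (0 : ℝ) < n := by
    have := Fintype.card_pos (α := α)
    rw [hn]; exact_mod_cast this
  have hγn : (0 : ℝ) < γ * n := mul_pos hγ hnpos
  have h1c : (0 : ℝ) < 1 + c := by linarith
  -- pointwise bound
  have key : ∀ x, |p x - q x| ≤ c * q x + (1 + c) * |q' x - q x| := by
    intro x
    have h1 : |p x - q x| ≤ |p x - q' x| + |q' x - q x| := by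
      calc |p x - q x| = |(p x - q' x) + (q' x - q x)| := by ring_nf
        _ ≤ |p x - q' x| + |q' x - q x| := abs_add_le _ _
    have h2 : c * q' x ≤ c * q x + c * |q' x - q x| := by
      have := le_abs_self (q' x - q x)
      nlinarith
    have := happ x
    linarith
  set S := Finset.univ.filter
      (fun x => c * q x + 2 * ε * (1 + c) / (γ * n) < |p x - q x|) with hS
  have hset : {x : α | c * q x + 2 * ε * (1 + c) / (γ * n) < |p x - q x|} = ↑S := by
    ext x; simp [hS]
  rw [hset, Set.ncard_coe_finset]
  -- each bad x has |q' x - q x| > 2ε/(γn)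
  have hbad : ∀ x ∈ S, 2 * ε / (γ * n) ≤ |q' x - q x| := by
    intro x hx
    simp only [hS, Finset.mem_filter] at hx
    have hk := key x
    have h : 2 * ε * (1 + c) / (γ * n) < (1 + c) * |q' x - q x| := by
      linarith [hx.2]
    rw [div_le_iff₀ hγn]
    rw [div_lt_iff₀ hγn] at h
    nlinarith
  have hsum : (S.card : ℝ) * (2 * ε / (γ * n)) ≤ ∑ x ∈ S, |q' x - q x| := by
    have := Finset.card_nsmul_le_sum S (fun x => |q' x - q x|) (2 * ε / (γ * n)) hbad
    simpa [nsmul_eq_mul] using this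
  have hsum2 : ∑ x ∈ S, |q' x - q x| ≤ 2 * ε := by
    refine le_trans (Finset.sum_le_sum_of_subset_of_nonneg (Finset.subset_univ S)
      (fun x _ _ => abs_nonneg _)) htv
  rcases eq_or_lt_of_le hε with h0 | hεpos
  · -- ε = 0: S is empty
    have : ∀ x, |q' x - q x| = 0 := by
      intro x
      have hnn : ∀ y ∈ Finset.univ, (0:ℝ) ≤ |q' y - q y| := fun y _ => abs_nonneg _
      have := (Finset.sum_eq_zero_iff_of_nonneg hnn).1
        (le_antisymm (by simpa [← h0] using htv) (Finset.sum_nonneg hnn)) x (Finset.mem_univ x)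
      exact this
    have hSe : S = ∅ := by
      apply Finset.eq_empty_of_forall_notMem
      intro x hx
      simp only [hS, Finset.mem_filter] at hx
      have hk := key x
      have := this x
      rw [← h0] at hx
      have : |p x - q x| ≤ c * q x := by rw [this] at hk; linarith
      have h2 : (0:ℝ) ≤ 2 * 0 * (1 + c) / (γ * n) := by positivity
      linarith [hx.2]
    simp [hSe]; positivity
  · -- ε > 0
    have h2ε : (0:ℝ) < 2 * ε := by linarith
    have h := mul_le_mul_of_nonneg_right (le_trans hsum hsum2) hγn.le
    have heq : (S.card : ℝ) * (2 * ε / (γ * n)) * (γ * n) = (S.card : ℝ) * (2 * ε) := by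
      field_simp
    rw [heq] at h
    nlinarith
end

section
/- Let α be a nonempty finite type with n = Fintype.card α, let q, q', p : α → ℝ with q and q' nonnegative, and let ε ≥ 0, c ≥ 0, α₂ > 0, β ≥ 0, γ > 0 be reals with γ < β. Assume ∑_{x} |q' x − q x| ≤ 2ε, |p x − q' x| ≤ c * q' x for all x, and that at least β * n elements x of α satisfy α₂ / n ≤ q x. Then at least (β − γ) * n elements x of α satisfy |p x − q x| ≤ (c + 2*ε*(1 + c)/(γ * α₂)) * q x. -/
/-- Combination of the Markov-counting step and anti-concentration in the proof of
Theorem 3: if `q` anti-concentrates (`q x ≥ α₂/n` for at least a `β` fraction of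
outcomes), `q'` is within total variation `ε` of `q`, and `p` approximates `q'` up
to multiplicative error `c`, then for at least a `β − γ` fraction of outcomes,
`p` approximates `q` up to purely multiplicative error `c + 2ε(1+c)/(γα₂)`. -/
theorem markov_anticoncentration_step {α : Type*} [Fintype α] [Nonempty α]
    (n : ℕ) (hn : n = Fintype.card α)
    (q q' p : α → ℝ) (hq : ∀ x, 0 ≤ q x) (hq' : ∀ x, 0 ≤ q' x)
    (ε c α₂ β γ : ℝ) (hε : 0 ≤ ε) (hc : 0 ≤ c) (hα₂ : 0 < α₂) (hβ : 0 ≤ β)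
    (hγ : 0 < γ) (hγβ : γ < β)
    (htv : ∑ x, |q' x - q x| ≤ 2 * ε)
    (happ : ∀ x, |p x - q' x| ≤ c * q' x)
    (hanti : β * n ≤ (({x : α | α₂ / n ≤ q x}.ncard : ℝ))) :
    (β - γ) * n
      ≤ (({x : α | |p x - q x| ≤ (c + 2 * ε * (1 + c) / (γ * α₂)) * q x}.ncard : ℝ)) := by
  classical
  have hnpos : 0 < (n : ℝ) := by
    have : 0 < Fintype.card α := Fintype.card_pos
    rw [hn]; exact_mod_cast this
  set t : ℝ := 2 * ε / (γ * n) with ht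
  have htnn : 0 ≤ t := by positivity
  set A : Finset α := Finset.univ.filter (fun x => α₂ / n ≤ q x) with hA
  set B : Finset α := Finset.univ.filter (fun x => |q' x - q x| ≤ t) with hB
  set T : Finset α := Finset.univ.filter
      (fun x => |p x - q x| ≤ (c + 2 * ε * (1 + c) / (γ * α₂)) * q x) with hT
  -- rewrite ncards as filter cards
  rw [Set.ncard_eq_toFinset_card', Set.toFinset_setOf] at hanti
  rw [Set.ncard_eq_toFinset_card', Set.toFinset_setOf]
  -- A ∩ B ⊆ T
  have hsub : A ∩ B ⊆ T := by
    intro x hx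
    simp only [hA, hB, Finset.mem_inter, Finset.mem_filter, Finset.mem_univ, true_and] at hx
    obtain ⟨hxA, hxB⟩ := hx
    simp only [hT, Finset.mem_filter, Finset.mem_univ, true_and]
    have hqx : α₂ / n ≤ q x := hxA
    have hqxpos : 0 < q x := lt_of_lt_of_le (by positivity) hqx
    have h1 : |p x - q x| ≤ c * q x + (1 + c) * |q' x - q x| := by
      have := abs_sub_abs_le_abs_sub (q' x) (q x)
      have hq'le : q' x ≤ q x + |q' x - q x| := by
        have := le_abs_self (q' x - q x); linarith
      calc |p x - q x| ≤ |p x - q' x| + |q' x - q x| := abs_sub_le _ _ _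
        _ ≤ c * q' x + |q' x - q x| := by linarith [happ x]
        _ ≤ c * (q x + |q' x - q x|) + |q' x - q x| := by nlinarith
        _ = c * q x + (1 + c) * |q' x - q x| := by ring
    have h2 : (1 + c) * |q' x - q x| ≤ 2 * ε * (1 + c) / (γ * α₂) * q x := by
      have h3 : (1 + c) * |q' x - q x| ≤ (1 + c) * t := by nlinarith
      have h4 : (1 + c) * t ≤ 2 * ε * (1 + c) / (γ * α₂) * q x := by
        have h5 : 2 * ε * (1 + c) / (γ * α₂) * (α₂ / n) ≤
            2 * ε * (1 + c) / (γ * α₂) * q x := by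
          apply mul_le_mul_of_nonneg_left hqx; positivity
        have h6 : (1 + c) * t = 2 * ε * (1 + c) / (γ * α₂) * (α₂ / n) := by
          rw [ht]; field_simp
        linarith
      linarith
    nlinarith [h1, h2]
  -- Markov: card Bᶜ ≤ γ n
  have hmarkov : ((Bᶜ.card : ℝ)) ≤ γ * n := by
    rcases eq_or_lt_of_le hε with hε0 | hεpos
    · -- ε = 0 : B = univ
      have hzero : ∀ x, |q' x - q x| = 0 := by
        intro x
        have h1 : ∑ y, |q' y - q y| ≤ 0 := by rw [← hε0] at htv; linarith
        have h2 : 0 ≤ ∑ y, |q' y - q y| := Finset.sum_nonneg fun y _ => abs_nonneg _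
        have := Finset.sum_eq_zero_iff_of_nonneg (fun y _ => abs_nonneg (q' y - q y))
          |>.mp (le_antisymm h1 h2)
        exact this x (Finset.mem_univ x)
      have : Bᶜ = ∅ := by
        rw [Finset.eq_empty_iff_forall_notMem]
        intro x hx
        simp only [hB, Finset.mem_compl, Finset.mem_filter, Finset.mem_univ, true_and] at hx
        exact hx (by rw [hzero x]; exact htnn)
      rw [this]; simp; positivity
    · -- ε > 0
      have hsum : (Bᶜ.card : ℝ) * t ≤ ∑ x ∈ Bᶜ, |q' x - q x| := by
        have := Finset.card_nsmul_le_sum Bᶜ (fun x => |q' x - q x|) t ?_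
        · simpa [nsmul_eq_mul] using this
        · intro x hx
          simp only [hB, Finset.mem_compl, Finset.mem_filter, Finset.mem_univ, true_and] at hx
          exact le_of_lt (lt_of_not_ge hx)
      have hsum2 : ∑ x ∈ Bᶜ, |q' x - q x| ≤ ∑ x, |q' x - q x| :=
        Finset.sum_le_sum_of_subset_of_nonneg (Finset.subset_univ _)
          (fun x _ _ => abs_nonneg _)
      have hkey : (Bᶜ.card : ℝ) * t ≤ 2 * ε := le_trans hsum (le_trans hsum2 htv)
      have htpos : 0 < t := by positivity
      rw [ht] at hkey
      have : (Bᶜ.card : ℝ) * (2 * ε) ≤ 2 * ε * (γ * n) := by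
        have := mul_le_mul_of_nonneg_right hkey (le_of_lt (mul_pos hγ hnpos))
        calc (Bᶜ.card : ℝ) * (2 * ε) = (Bᶜ.card : ℝ) * (2 * ε / (γ * n)) * (γ * n) := by
              field_simp
          _ ≤ 2 * ε * (γ * n) := this
      nlinarith
  -- card counting
  have hAB : (A.card : ℝ) - (Bᶜ.card : ℝ) ≤ ((A ∩ B).card : ℝ) := by
    have h1 : A \ B ⊆ Bᶜ := by
      intro x hx
      rw [Finset.mem_sdiff] at hx
      exact Finset.mem_compl.mpr hx.2
    have h2 : (A \ B).card ≤ Bᶜ.card := Finset.card_le_card h1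
    have h3 : (A ∩ B).card + (A \ B).card = A.card := by
      rw [Finset.card_inter_add_card_sdiff]
    have h2' : ((A \ B).card : ℝ) ≤ (Bᶜ.card : ℝ) := by exact_mod_cast h2
    have h3' : ((A ∩ B).card : ℝ) + ((A \ B).card : ℝ) = (A.card : ℝ) := by exact_mod_cast h3
    linarith
  have hTcard : ((A ∩ B).card : ℝ) ≤ (T.card : ℝ) := by
    exact_mod_cast Finset.card_le_card hsub
  linarith
end
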